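/- Let S be a closed subset of a real Banach space X which is compactly epi-Lipschitzian (CEL) at x̄ ∈ bdry S. If the Clarke tangent cone T(S,x̄) contains a closed hyperplane H of X, then T(S,x̄) ∩ (−T(S,x̄)) = H. -/

import Mathlib

open Filter Metric Set Topology

/-- `S` is epi-Lipschitzian at `x` : there is a direction `v ≠ 0` and `γ > 0` with
`S ∩ B(x,γ) + t·B(v,γ) ⊆ S` for all `t ∈ (0,γ)`. -/
def EpiLipschitzAt {X : Type*} [NormedAddCommGroup X] [NormedSpace ℝ X]
    (S : Set X) (x : X) : Prop :=
  ∃ v : X, v ≠ 0 ∧ ∃ γ : ℝ, 0 < γ ∧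
    ∀ t : ℝ, 0 < t → t < γ → ∀ s ∈ S ∩ Metric.ball x γ, ∀ w ∈ Metric.ball v γ,
      s + t • w ∈ S

/-- The Clarke tangent cone to `S` at `x`. -/
def ClarkeTangentCone {X : Type*} [NormedAddCommGroup X] [NormedSpace ℝ X]
    (S : Set X) (x : X) : Set X :=
  {v | ∀ V ∈ 𝓝 v, ∃ U ∈ 𝓝 x, ∃ lam : ℝ, 0 < lam ∧
    ∀ t : ℝ, 0 < t → t < lam → ∀ y ∈ U ∩ S, ∃ w ∈ V, y + t • w ∈ S}

/-- The Clarke normal cone : negative polar of the Clarke tangent cone. -/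
def ClarkeNormalCone {X : Type*} [NormedAddCommGroup X] [NormedSpace ℝ X]
    (S : Set X) (x : X) : Set (X →L[ℝ] ℝ) :=
  {p | ∀ h ∈ ClarkeTangentCone S x, p h ≤ 0}

/-- Clarke generalized directional derivative of `f` at `x` in direction `h`. -/
noncomputable def clarkeDeriv {X : Type*} [NormedAddCommGroup X] [NormedSpace ℝ X]
    (f : X → ℝ) (x : X) (h : X) : ℝ :=
  Filter.limsup (fun q : X × ℝ => (f (q.1 + q.2 • h) - f q.1) / q.2)
    ((𝓝 x) ×ˢ (𝓝[>] (0 : ℝ)))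

/-- The Clarke subdifferential of `f` at `x`. -/
def ClarkeSubdiff {X : Type*} [NormedAddCommGroup X] [NormedSpace ℝ X]
    (f : X → ℝ) (x : X) : Set (X →L[ℝ] ℝ) :=
  {p | ∀ h : X, p h ≤ clarkeDeriv f x h}

/-- Signed distance function to `S`. -/
noncomputable def signedDistToSet {X : Type*} [NormedAddCommGroup X] (S : Set X) (x : X) : ℝ :=
  Metric.infDist x S - Metric.infDist x Sᶜ

/-- `f` is Lipschitz continuous in some neighbourhood of `x`. -/
def LipschitzNear {X Y : Type*} [PseudoMetricSpace X] [PseudoMetricSpace Y]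
    (f : X → Y) (x : X) : Prop :=
  ∃ K : NNReal, ∃ U ∈ 𝓝 x, LipschitzOnWith K f U

/-- `g` is strictly Hadamard differentiable at `x` with derivative `D`. -/
def HasStrictHadamardDerivAt {X Y : Type*} [NormedAddCommGroup X] [NormedSpace ℝ X]
    [NormedAddCommGroup Y] [NormedSpace ℝ Y] (g : X → Y) (D : X →L[ℝ] Y) (x : X) : Prop :=
  ∀ h : X, Filter.Tendsto
    (fun q : ℝ × X × X => (q.1)⁻¹ • (g (q.2.1 + q.1 • q.2.2) - g q.2.1))
    ((𝓝[>] (0 : ℝ)) ×ˢ (𝓝 x) ×ˢ (𝓝 h)) (𝓝 (D h))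

/-- `g` is strictly Hadamard differentiable at `x`. -/
def StrictHadamardDiffAt {X Y : Type*} [NormedAddCommGroup X] [NormedSpace ℝ X]
    [NormedAddCommGroup Y] [NormedSpace ℝ Y] (g : X → Y) (x : X) : Prop :=
  ∃ D : X →L[ℝ] Y, HasStrictHadamardDerivAt g D x

/-- `S` is compactly epi-Lipschitzian (CEL) at `x`. -/
def CELAt {X : Type*} [NormedAddCommGroup X] [NormedSpace ℝ X] (S : Set X) (x : X) : Prop :=
  ∃ γ : ℝ, 0 < γ ∧ ∃ H : Set X, IsCompact H ∧
    ∀ t ∈ Set.Icc (0 : ℝ) γ, ∀ s ∈ S ∩ Metric.ball x γ, ∀ b ∈ Metric.ball (0 : X) 1,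
      ∃ s' ∈ S, ∃ h ∈ H, s + t • b = s' + t • h

/-- The contingent (Bouligand) cone to `S` at `x`. -/
def contingentCone {X : Type*} [NormedAddCommGroup X] [NormedSpace ℝ X]
    (S : Set X) (x : X) : Set X :=
  {v | ∀ ε : ℝ, 0 < ε → ∀ δ : ℝ, 0 < δ →
    ∃ t : ℝ, 0 < t ∧ t < δ ∧ ∃ w : X, ‖w - v‖ < ε ∧ x + t • w ∈ S}

/-- Kuratowski upper limit of a family of sets along a filter. -/
def setLimsup {α X : Type*} [NormedAddCommGroup X] (l : Filter α) (F : α → Set X) : Set X :=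
  {h | Filter.liminf (fun a => Metric.infDist h (F a)) l = 0}

/-- Kuratowski lower limit of a family of sets along a filter. -/
def setLiminf {α X : Type*} [NormedAddCommGroup X] (l : Filter α) (F : α → Set X) : Set X :=
  {h | Filter.Tendsto (fun a => Metric.infDist h (F a)) l (𝓝 0)}

theorem clarke_smul_mem {X : Type*} [NormedAddCommGroup X] [NormedSpace ℝ X]
    {S : Set X} {x v : X} (hv : v ∈ ClarkeTangentCone S x) {c : ℝ} (hc : 0 < c) :
    c • v ∈ ClarkeTangentCone S x := by
  intro V hV
  have hmap : (fun u : X => c • u) ⁻¹' V ∈ 𝓝 v :=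
    (continuous_const_smul c).continuousAt.preimage_mem_nhds (by simpa using hV)
  obtain ⟨U, hU, lam, hlam, hp⟩ := hv _ hmap
  refine ⟨U, hU, lam / c, by positivity, fun t ht htl y hy => ?_⟩
  obtain ⟨w, hw, hws⟩ := hp (c * t) (by positivity)
    (by rw [lt_div_iff₀ hc, mul_comm] at htl; exact htl) y hy
  refine ⟨c • w, hw, ?_⟩
  rwa [smul_smul, mul_comm t c]

theorem clarke_add_mem {X : Type*} [NormedAddCommGroup X] [NormedSpace ℝ X]
    {S : Set X} {x v₁ v₂ : X} (h1 : v₁ ∈ ClarkeTangentCone S x)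
    (h2 : v₂ ∈ ClarkeTangentCone S x) : v₁ + v₂ ∈ ClarkeTangentCone S x := by
  intro V hV
  obtain ⟨ε, hε, hball⟩ := Metric.mem_nhds_iff.1 hV
  obtain ⟨U₂, hU₂, lam₂, hlam₂, hp₂⟩ := h2 (ball v₂ (ε/2)) (ball_mem_nhds _ (by positivity))
  obtain ⟨ρ, hρ, hρU⟩ := Metric.mem_nhds_iff.1 hU₂
  obtain ⟨U₁, hU₁, lam₁, hlam₁, hp₁⟩ := h1 (ball v₁ (ε/2)) (ball_mem_nhds _ (by positivity))
  refine ⟨U₁ ∩ ball x (ρ/2), Filter.inter_mem hU₁ (ball_mem_nhds _ (by positivity)),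
    min (min lam₁ lam₂) (ρ/2/(‖v₁‖ + ε/2)), by positivity, fun t ht htl y hy => ?_⟩
  obtain ⟨⟨hyU₁, hyB⟩, hyS⟩ := hy
  obtain ⟨w₁, hw₁, hw₁S⟩ := hp₁ t ht (lt_of_lt_of_le htl ((min_le_left _ _).trans (min_le_left _ _)))
    y ⟨hyU₁, hyS⟩
  have hnw₁ : ‖w₁‖ < ‖v₁‖ + ε/2 := by
    have := mem_ball_iff_norm.1 hw₁
    calc ‖w₁‖ ≤ ‖v₁‖ + ‖w₁ - v₁‖ := by
          simpa using norm_add_le v₁ (w₁ - v₁)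
      _ < ‖v₁‖ + ε/2 := by linarith
  have hmem2 : y + t • w₁ ∈ U₂ ∩ S := by
    refine ⟨hρU ?_, hw₁S⟩
    have h1' : dist (y + t • w₁) x ≤ dist y x + ‖t • w₁‖ := by
      calc dist (y + t • w₁) x ≤ dist (y + t • w₁) y + dist y x := dist_triangle _ _ _
        _ = dist y x + ‖t • w₁‖ := by
            rw [add_comm]; congr 1; rw [dist_eq_norm]; congr 1; abel
    have h2' : ‖t • w₁‖ < ρ/2 := by
      rw [norm_smul, Real.norm_eq_abs, abs_of_pos ht]
      have htl' : t < ρ/2/(‖v₁‖ + ε/2) := lt_of_lt_of_le htl (min_le_right _ _)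
      have hpos : (0:ℝ) < ‖v₁‖ + ε/2 := by positivity
      calc t * ‖w₁‖ ≤ t * (‖v₁‖ + ε/2) := by nlinarith [norm_nonneg w₁]
        _ < ρ/2 := by
          have := (lt_div_iff₀ hpos).1 htl'
          linarith
    have := mem_ball.1 hyB
    exact mem_ball.2 (by linarith)
  obtain ⟨w₂, hw₂, hw₂S⟩ := hp₂ t ht (lt_of_lt_of_le htl ((min_le_left _ _).trans (min_le_right _ _)))
    (y + t • w₁) hmem2
  refine ⟨w₁ + w₂, hball ?_, ?_⟩
  · have d1 := mem_ball_iff_norm.1 hw₁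
    have d2 := mem_ball_iff_norm.1 hw₂
    rw [mem_ball_iff_norm]
    calc ‖w₁ + w₂ - (v₁ + v₂)‖ = ‖(w₁ - v₁) + (w₂ - v₂)‖ := by congr 1; abel
      _ ≤ ‖w₁ - v₁‖ + ‖w₂ - v₂‖ := norm_add_le _ _
      _ < ε := by linarith
  · rw [smul_add, ← add_assoc]; exact hw₂S


/-- if a closed set `S`, CEL at `x̄ ∈ bdry S`, has Clarke tangent
cone containing a closed hyperplane `H`, then `T(S,x̄) ∩ (−T(S,x̄)) = H`. -/
theorem clarkeTangentCone_inter_neg_eq_hyperplane_of_CEL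
    {X : Type*} [NormedAddCommGroup X] [NormedSpace ℝ X] [CompleteSpace X]
    (S : Set X) (hS : IsClosed S) (x : X) (hxb : x ∈ frontier S) (hcel : CELAt S x)
    (l : X →L[ℝ] ℝ) (hl : l ≠ 0) (H : Set X) (hH : H = {y : X | l y = 0})
    (hHT : H ⊆ ClarkeTangentCone S x) :
    ClarkeTangentCone S x ∩ (-(ClarkeTangentCone S x)) = H := by
  have hxS : x ∈ S := hS.frontier_subset hxb
  have hxnotint : x ∉ interior S := by
    rw [hS.frontier_eq] at hxb
    exact hxb.2
  apply Set.Subset.antisymm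
  · rintro v ⟨hvT, hvnT⟩
    rw [hH]
    by_contra hlv
    have hlv' : l v ≠ 0 := hlv
    have hvT' : -v ∈ ClarkeTangentCone S x := Set.mem_neg.1 hvnT
    -- then the whole cone is everything
    have hTuniv : ∀ u : X, u ∈ ClarkeTangentCone S x := by
      intro u
      set a := l u / l v with ha
      have hmemH : u - a • v ∈ ClarkeTangentCone S x := by
        apply hHT
        rw [hH]
        simp only [Set.mem_setOf_eq, map_sub, map_smul, smul_eq_mul, ha]
        field_simp; ring
      have key : u = (u - a • v) + a • v := by abel
      rcases lt_trichotomy a 0 with hlt | heq | hgt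
      · have key2 : u = (u - a • v) + (-a) • (-v) := by
          rw [smul_neg, neg_smul, neg_neg]; exact key
        rw [key2]
        exact clarke_add_mem hmemH (clarke_smul_mem hvT' (by linarith))
      · simpa [heq] using hmemH
      · rw [key]
        exact clarke_add_mem hmemH (clarke_smul_mem hvT hgt)
    exfalso
    apply hxnotint
    classical
    obtain ⟨γ, hγ, H₀, hH₀c, hcelP⟩ := hcel
    obtain ⟨M, hM⟩ := hH₀c.isBounded.subset_closedBall 0
    set M' : ℝ := max M 1 with hM'
    have hM'1 : (1:ℝ) ≤ M' := le_max_right _ _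
    -- finite cover of H₀ by balls of radius 1/4
    have hcov : H₀ ⊆ ⋃ i ∈ H₀, ball i (1/4) :=
      fun h hh => Set.mem_biUnion hh (mem_ball_self (by norm_num))
    obtain ⟨F, hFsub, hFfin, hFcov⟩ :=
      hH₀c.elim_finite_subcover_image (fun i _ => isOpen_ball) hcov
    -- tangency data for every direction
    have key : ∀ i : X, ∃ ρ lam : ℝ, 0 < ρ ∧ 0 < lam ∧
        ∀ t : ℝ, 0 < t → t < lam → ∀ y ∈ ball x ρ ∩ S,
          ∃ w ∈ ball i (1/4), y + t • w ∈ S := by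
      intro i
      obtain ⟨U, hU, lam, hlam, hp⟩ := hTuniv i (ball i (1/4)) (ball_mem_nhds _ (by norm_num))
      obtain ⟨ρ, hρ, hρU⟩ := Metric.mem_nhds_iff.1 hU
      exact ⟨ρ, lam, hρ, hlam, fun t ht htl y hy => hp t ht htl y ⟨hρU hy.1, hy.2⟩⟩
    choose ρf lamf hρf hlamf hkey using key
    set Fs : Finset X := insert (0:X) hFfin.toFinset with hFs
    have hFsne : Fs.Nonempty := Finset.insert_nonempty _ _
    set ρm : ℝ := Fs.inf' hFsne ρf with hρm
    set lamm : ℝ := Fs.inf' hFsne lamf with hlamm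
    have hρmpos : 0 < ρm := (Finset.lt_inf'_iff hFsne).2 fun i _ => hρf i
    have hlammpos : 0 < lamm := (Finset.lt_inf'_iff hFsne).2 fun i _ => hlamf i
    set r : ℝ := min (min (ρm / (1 + 2 * M')) (γ / 3)) (lamm / 3) with hr
    have hrpos : 0 < r := by
      refine lt_min (lt_min ?_ (by positivity)) (by positivity)
      have : (0:ℝ) < 1 + 2 * M' := by linarith
      positivity
    have hrρ : r * (1 + 2 * M') ≤ ρm := by
      have h1 : r ≤ ρm / (1 + 2 * M') := (min_le_left _ _).trans (min_le_left _ _)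
      have h2 : (0:ℝ) < 1 + 2 * M' := by linarith
      rw [le_div_iff₀ h2] at h1
      exact h1
    have hrγ : r ≤ γ / 3 := (min_le_left _ _).trans (min_le_right _ _)
    have hrlam : r ≤ lamm / 3 := min_le_right _ _
    -- show ball x r ⊆ S
    have hball_sub : ball x r ⊆ S := by
      intro z hz
      rw [mem_ball] at hz
      set d : ℝ := infDist z S with hd
      have hd0 : 0 ≤ d := infDist_nonneg
      have hdr : d < r := lt_of_le_of_lt (infDist_le_dist_of_mem hxS) hz
      rcases eq_or_lt_of_le hd0 with heq0 | hdpos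
      · exact (hS.mem_iff_infDist_zero ⟨x, hxS⟩).2 heq0.symm
      exfalso
      obtain ⟨s, hsS, hds⟩ := (infDist_lt_iff ⟨x, hxS⟩).1
        (show infDist z S < (5/4) * d by rw [← hd]; linarith)
      have hdzs : d ≤ dist z s := infDist_le_dist_of_mem hsS
      set t : ℝ := (6/5) * dist z s with htdef
      have ht : 0 < t := by
        have : 0 < dist z s := lt_of_lt_of_le hdpos hdzs
        positivity
      have htd : t < (3/2) * d := by rw [htdef]; linarith
      have htr : t < (3/2) * r := by linarith
      set b : X := t⁻¹ • (z - s) with hbdef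
      have hbnorm : ‖b‖ < 1 := by
        rw [hbdef, norm_smul, Real.norm_eq_abs, abs_of_pos (inv_pos.2 ht), ← dist_eq_norm]
        have hD : dist z s ≠ 0 := ne_of_gt (lt_of_lt_of_le hdpos hdzs)
        have : t⁻¹ * dist z s = 5/6 := by
          rw [htdef]; field_simp
        rw [this]; norm_num
      have hsball : s ∈ ball x γ := by
        rw [mem_ball]
        have h1 : dist s x ≤ dist s z + dist z x := dist_triangle _ _ _
        rw [dist_comm s z] at h1
        linarith
      obtain ⟨s', hs'S, h, hhH₀, heqz⟩ := hcelP t ⟨le_of_lt ht, by linarith⟩ s ⟨hsS, hsball⟩ b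
        (mem_ball_iff_norm.2 (by simpa using hbnorm))
      have hz_eq : z = s' + t • h := by
        rw [← heqz, hbdef, smul_smul, mul_inv_cancel₀ (ne_of_gt ht), one_smul]
        abel
      -- cover index
      obtain ⟨i, hiF, hhi⟩ := Set.mem_iUnion₂.1 (hFcov hhH₀)
      have hiFs : i ∈ Fs := Finset.mem_insert_of_mem (hFfin.mem_toFinset.2 hiF)
      have hhM : ‖h‖ ≤ M' := by
        have := mem_closedBall_iff_norm.1 (hM hhH₀)
        simp only [sub_zero] at this
        exact this.trans (le_max_left _ _)
      have hs'ball : s' ∈ ball x (ρf i) := by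
        rw [mem_ball]
        have h1 : dist s' x ≤ dist z x + t * ‖h‖ := by
          calc dist s' x ≤ dist s' z + dist z x := dist_triangle _ _ _
            _ = dist z x + t * ‖h‖ := by
                rw [add_comm]; congr 1
                rw [dist_comm, hz_eq, dist_eq_norm]
                simp [norm_smul, abs_of_pos ht]
        have h2 : t * ‖h‖ ≤ t * M' := by nlinarith [norm_nonneg h]
        have h3 : ρm ≤ ρf i := Finset.inf'_le _ hiFs
        nlinarith
      have htlam : t < lamf i := by
        have h3 : lamm ≤ lamf i := Finset.inf'_le _ hiFs
        linarith
      obtain ⟨w, hwball, hwS⟩ := hkey i t ht htlam s' ⟨hs'ball, hs'S⟩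
      have hdistzw : dist z (s' + t • w) = t * dist h w := by
        rw [hz_eq, dist_eq_norm]
        have : s' + t • h - (s' + t • w) = t • (h - w) := by
          rw [smul_sub]; abel
        rw [this, norm_smul, Real.norm_eq_abs, abs_of_pos ht, dist_eq_norm]
      have hhw : dist h w < 1/2 := by
        have h1 : dist h w ≤ dist h i + dist i w := dist_triangle _ _ _
        have h2 : dist h i < 1/4 := mem_ball.1 hhi
        have h3 : dist i w < 1/4 := by rw [dist_comm]; exact mem_ball.1 hwball
        linarith
      have hfinal : d ≤ t * dist h w := by
        rw [← hdistzw]; exact infDist_le_dist_of_mem hwS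
      nlinarith [dist_nonneg (x := h) (y := w)]
    exact mem_interior.2 ⟨ball x r, hball_sub, isOpen_ball, mem_ball_self hrpos⟩
  · intro y hy
    constructor
    · exact hHT hy
    · rw [Set.mem_neg]
      apply hHT
      rw [hH] at hy ⊢
      simpa using hy
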